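/- Let A be a nonempty convex set in ℝ^k and g : A → ℝ a concave function. Define W(x) = sup{g(a) + a·x : a ∈ A} for x ∈ ℝ^k and G(a) = inf{W(x) - a·x : x ∈ ℝ^k} for a ∈ ℝ^k. Then G(a) = g(a) for every a in the relative interior of A. Moreover, if A is closed and g is upper semi-continuous at a point a ∈ A, then G(a) = g(a). -/

import Mathlib

/-!
`g ≤ G` on `A` is immediate: take `a` itself in the supremum defining `W`. Conversely, if `g` is
upper semicontinuous within `A` at `a` and `c > g a`, then `(a, c)` lies outside the closure of the
(convex) hypograph of `g`. A hyperplane separating them cannot be vertical, so it is the graph of an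
affine majorant `β - ⟪·, x⟫` of `g` on `A` with value `< c` at `a`; this gives
`G a ≤ W x - ⟪a, x⟫ < c`. Upper semicontinuity is automatic on the relative interior: in a chart of
the affine span of `A` by its direction, such a point becomes an interior point, and concave
functions on finite-dimensional spaces are continuous on the interior of their domain.
-/

open Filter Topology Set

noncomputable section

variable {k : ℕ}

/-- `W(x) = sup {g(a) + ⟪a, x⟫ : a ∈ A}`, valued in `EReal` (it may be `+∞`). -/
def Wfun (A : Set (EuclideanSpace ℝ (Fin k))) (g : EuclideanSpace ℝ (Fin k) → ℝ)
    (x : EuclideanSpace ℝ (Fin k)) : EReal :=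
  ⨆ a ∈ A, (((g a + (inner ℝ a x : ℝ)) : ℝ) : EReal)

/-- `G(a) = inf {W(x) - ⟪a, x⟫ : x ∈ ℝ^k}`. -/
def Gfun (A : Set (EuclideanSpace ℝ (Fin k))) (g : EuclideanSpace ℝ (Fin k) → ℝ)
    (a : EuclideanSpace ℝ (Fin k)) : EReal :=
  ⨅ x : EuclideanSpace ℝ (Fin k), Wfun A g x - (((inner ℝ a x : ℝ)) : EReal)

section Concave

variable {E : Type*} {s : Set E} {g : E → ℝ} {a : E}

theorem UpperSemicontinuousWithinAt.notMem_closure_hypograph [TopologicalSpace E]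
    (hg : UpperSemicontinuousWithinAt g s a) {c : ℝ} (hc : g a < c) :
    (a, c) ∉ closure {p : E × ℝ | p.1 ∈ s ∧ p.2 ≤ g p.1} := by
  obtain ⟨c', hac', hc'c⟩ := exists_between hc
  have hbelow : ∀ᶠ p : E × ℝ in 𝓝 (a, c), p.1 ∈ s → g p.1 < c' :=
    (continuous_fst.tendsto (a, c)).eventually (eventually_nhdsWithin_iff.1 (hg c' hac'))
  have habove : ∀ᶠ p : E × ℝ in 𝓝 (a, c), c' < p.2 :=
    (continuous_snd.tendsto (a, c)).eventually (lt_mem_nhds hc'c)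
  intro hmem
  obtain ⟨p, ⟨hps, hpg⟩, hlt, hgt⟩ :=
    ((mem_closure_iff_frequently.1 hmem).and_eventually (hbelow.and habove)).exists
  linarith [hlt hps]

theorem ConcaveOn.exists_affine_majorant_lt [NormedAddCommGroup E] [NormedSpace ℝ E]
    (hg : ConcaveOn ℝ s g) (ha : a ∈ s) (husc : UpperSemicontinuousWithinAt g s a) {c : ℝ}
    (hc : g a < c) :
    ∃ (ℓ : StrongDual ℝ E) (β : ℝ), (∀ b ∈ s, g b + ℓ b ≤ β) ∧ β - ℓ a < c := by
  obtain ⟨f, u, hfH, hfac⟩ := geometric_hahn_banach_closed_point hg.convex_hypograph.closure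
    isClosed_closure (husc.notMem_closure_hypograph hc)
  set σ := f (0, 1)
  have hsplit : ∀ b t, f (b, t) = f (b, 0) + t * σ := fun b t => by
    rw [show ((b, t) : E × ℝ) = (b, 0) + t • (0, 1) by simp, map_add, map_smul, smul_eq_mul]
  have hH : ∀ b ∈ s, f (b, 0) + g b * σ < u := fun b hb => by
    rw [← hsplit]; exact hfH _ (subset_closure ⟨hb, le_rfl⟩)
  rw [hsplit] at hfac
  -- `(a, g a)` and `(a, c)` lie on opposite sides, so the separating hyperplane is not vertical
  have hσ : 0 < σ := by nlinarith [hH a ha]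
  refine ⟨σ⁻¹ • f.comp (ContinuousLinearMap.inl ℝ E ℝ), u / σ, fun b hb => ?_, ?_⟩
  · have := hH b hb
    simp only [smul_apply, ContinuousLinearMap.comp_apply,
      ContinuousLinearMap.inl_apply, smul_eq_mul]
    field_simp
    linarith
  · simp only [smul_apply, ContinuousLinearMap.comp_apply,
      ContinuousLinearMap.inl_apply, smul_eq_mul]
    rw [div_sub' hσ.ne', div_lt_iff₀ hσ]
    field_simp
    linarith

theorem ConcaveOn.continuousWithinAt_of_mem_intrinsicInterior [NormedAddCommGroup E]
    [NormedSpace ℝ E] [FiniteDimensional ℝ E] (hg : ConcaveOn ℝ s g)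
    (ha : a ∈ intrinsicInterior ℝ s) : ContinuousWithinAt g s a := by
  obtain ⟨a', ha'int, rfl⟩ := ha
  have : Nonempty (affineSpan ℝ s) := ⟨a'⟩
  let e := AffineIsometryEquiv.vaddConst ℝ a'
  have hconc : ConcaveOn ℝ (e ⁻¹' ((↑) ⁻¹' s)) (g ∘ (↑) ∘ e) :=
    hg.comp_affineMap ((affineSpan ℝ s).subtype.comp e.toAffineEquiv.toAffineMap)
  have hnhds : e ⁻¹' ((↑) ⁻¹' s) ∈ 𝓝 0 :=
    e.continuous.continuousAt.preimage_mem_nhds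
      (by simpa [e] using mem_interior_iff_mem_nhds.1 ha'int)
  have hspan : ContinuousAt (g ∘ (↑)) a' := by
    have := (hconc.continuousOn_interior.continuousAt (interior_mem_nhds.2 hnhds)).comp_of_eq
      (e.symm.continuous.continuousAt (x := a')) (by simp [e])
    simpa [Function.comp_def] using this
  have hsP : 𝓝[s] (a' : E) ≤ map (↑) (𝓝 a') :=
    (nhdsWithin_mono _ (subset_affineSpan ℝ s)).trans_eq (nhdsWithin_eq_map_subtype_coe a'.2)
  exact (tendsto_map'_iff.2 hspan).mono_left hsP

end Concave

section Biconjugate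

variable {A : Set (EuclideanSpace ℝ (Fin k))} {g : EuclideanSpace ℝ (Fin k) → ℝ}
  {a : EuclideanSpace ℝ (Fin k)}

theorem coe_le_Gfun (ha : a ∈ A) : ((g a : ℝ) : EReal) ≤ Gfun A g a := by
  refine le_iInf fun x => ?_
  rw [EReal.le_sub_iff_add_le (.inl (EReal.coe_ne_bot _)) (.inl (EReal.coe_ne_top _)),
    ← EReal.coe_add]
  exact le_biSup (fun b => ((g b + inner ℝ b x : ℝ) : EReal)) ha

theorem Gfun_le_of_forall_add_le (ℓ : StrongDual ℝ (EuclideanSpace ℝ (Fin k))) {β : ℝ}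
    (hβ : ∀ b ∈ A, g b + ℓ b ≤ β) (a : EuclideanSpace ℝ (Fin k)) :
    Gfun A g a ≤ ((β - ℓ a : ℝ) : EReal) := by
  set x := (InnerProductSpace.toDual ℝ (EuclideanSpace ℝ (Fin k))).symm ℓ
  have hx : ∀ b, inner ℝ b x = ℓ b := fun b => by
    rw [real_inner_comm, InnerProductSpace.toDual_symm_apply]
  have hW : Wfun A g x ≤ β :=
    iSup₂_le fun b hb => EReal.coe_le_coe_iff.2 (by rw [hx]; exact hβ b hb)
  calc Gfun A g a ≤ Wfun A g x - ((inner ℝ a x : ℝ) : EReal) := iInf_le _ x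
    _ ≤ ((β - ℓ a : ℝ) : EReal) := by rw [hx, EReal.coe_sub]; exact EReal.sub_le_sub hW le_rfl

theorem ConcaveOn.Gfun_eq_of_upperSemicontinuousWithinAt (hg : ConcaveOn ℝ A g) (ha : a ∈ A)
    (husc : UpperSemicontinuousWithinAt g A a) : Gfun A g a = ((g a : ℝ) : EReal) := by
  refine le_antisymm (EReal.le_of_forall_lt_iff_le.1 fun c hc => ?_) (coe_le_Gfun ha)
  obtain ⟨ℓ, β, hβ, hβc⟩ := hg.exists_affine_majorant_lt ha husc (EReal.coe_lt_coe_iff.1 hc)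
  exact (Gfun_le_of_forall_add_le ℓ hβ a).trans (EReal.coe_le_coe_iff.2 hβc.le)

end Biconjugate

theorem stmt3_general (A : Set (EuclideanSpace ℝ (Fin k)))
    (g : EuclideanSpace ℝ (Fin k) → ℝ) (hg : ConcaveOn ℝ A g) :
    (∀ a ∈ intrinsicInterior ℝ A, Gfun A g a = ((g a : ℝ) : EReal)) ∧
    (IsClosed A → ∀ a ∈ A, UpperSemicontinuousWithinAt g A a →
      Gfun A g a = ((g a : ℝ) : EReal)) :=
  ⟨fun _ ha => hg.Gfun_eq_of_upperSemicontinuousWithinAt (intrinsicInterior_subset ha)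
      (hg.continuousWithinAt_of_mem_intrinsicInterior ha).upperSemicontinuousWithinAt,
    fun _ _ ha husc => hg.Gfun_eq_of_upperSemicontinuousWithinAt ha husc⟩

/-- Corollary 2.5: biconjugation recovers a concave `g : A → ℝ` on the
relative (intrinsic) interior of `A`, and—when `A` is closed—at every point of `A`
where `g` is upper semi-continuous. -/
theorem stmt3 (A : Set (EuclideanSpace ℝ (Fin k))) (hAne : A.Nonempty)
    (hAconv : Convex ℝ A) (g : EuclideanSpace ℝ (Fin k) → ℝ) (hg : ConcaveOn ℝ A g) :
    (∀ a ∈ intrinsicInterior ℝ A, Gfun A g a = ((g a : ℝ) : EReal)) ∧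
    (IsClosed A → ∀ a ∈ A, UpperSemicontinuousWithinAt g A a →
      Gfun A g a = ((g a : ℝ) : EReal)) :=
  stmt3_general A g hg
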